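/- arXiv:2111.03230 — 7 statements merged into one kernel-verified Lean document; each statement's English description precedes it below -/
import Mathlib

section
/- Let μ ∈ ℂ and suppose W ∈ SL(2,ℂ) can be written either as W = X·U·Y_μ·U⁻¹ for some U ∈ SL(2,ℂ), or as W = X·U·X⁻¹·U⁻¹ for some U ∈ SL(2,ℂ). Then the lower-left entry of W equals tr(W) − 2. -/
open Matrix

noncomputable def X : Matrix.SpecialLinearGroup (Fin 2) ℂ :=
  ⟨!![1, 1; 0, 1], by simp [Matrix.det_fin_two_of]⟩

noncomputable def Y (μ : ℂ) : Matrix.SpecialLinearGroup (Fin 2) ℂ :=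
  ⟨!![1, 0; μ, 1], by simp [Matrix.det_fin_two_of]⟩

/-! Left multiplication by `X` keeps the lower-left entry `c` of a matrix and adds `c` to its
trace. Both words are `X` times a conjugate of `Y μ` or `X⁻¹`, a matrix of trace `2`, so their
trace is `2 + c`. -/

namespace Matrix.SpecialLinearGroup

variable {n R : Type*} [Fintype n] [DecidableEq n] [CommRing R]

theorem trace_conj (U V : SpecialLinearGroup n R) :
    trace (↑(U * V * U⁻¹) : Matrix n n R) = trace (V : Matrix n n R) := by
  rw [coe_mul, coe_mul, trace_mul_cycle, ← coe_mul, inv_mul_cancel, coe_one, one_mul]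

end Matrix.SpecialLinearGroup

section UpperUnipotent

variable {R : Type*} [CommRing R]

theorem upperUnipotent_mul_apply_one_zero (V : Matrix (Fin 2) (Fin 2) R) :
    (!![1, 1; 0, 1] * V : Matrix (Fin 2) (Fin 2) R) 1 0 = V 1 0 := by
  simp [Matrix.mul_apply, Fin.sum_univ_two]

theorem trace_upperUnipotent_mul (V : Matrix (Fin 2) (Fin 2) R) :
    trace (!![1, 1; 0, 1] * V) = trace V + V 1 0 := by
  simp [trace_fin_two, vecMul, dotProduct, Fin.sum_univ_two]
  ring

theorem upperUnipotent_mul_apply_one_zero_eq_trace_sub_two {V : Matrix (Fin 2) (Fin 2) R}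
    (hV : trace V = 2) :
    (!![1, 1; 0, 1] * V : Matrix (Fin 2) (Fin 2) R) 1 0 = trace (!![1, 1; 0, 1] * V) - 2 := by
  rw [upperUnipotent_mul_apply_one_zero, trace_upperUnipotent_mul, hV]
  ring

end UpperUnipotent

theorem trace_Y (μ : ℂ) : trace (Y μ : Matrix (Fin 2) (Fin 2) ℂ) = 2 := by
  norm_num [Y, trace_fin_two]

theorem trace_X_inv : trace (↑(X⁻¹) : Matrix (Fin 2) (Fin 2) ℂ) = 2 := by
  change trace (adjugate !![1, 1; 0, 1]) = 2
  norm_num [adjugate_fin_two, trace_fin_two]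

theorem coe_X_mul (V : Matrix.SpecialLinearGroup (Fin 2) ℂ) :
    (↑(X * V) : Matrix (Fin 2) (Fin 2) ℂ) = !![1, 1; 0, 1] * (V : Matrix (Fin 2) (Fin 2) ℂ) :=
  rfl

theorem X_mul_conj_apply_one_zero {U V : Matrix.SpecialLinearGroup (Fin 2) ℂ}
    (hV : trace (V : Matrix (Fin 2) (Fin 2) ℂ) = 2) :
    (↑(X * U * V * U⁻¹) : Matrix (Fin 2) (Fin 2) ℂ) 1 0 =
      trace (↑(X * U * V * U⁻¹) : Matrix (Fin 2) (Fin 2) ℂ) - 2 := by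
  rw [mul_assoc, mul_assoc, ← mul_assoc U, coe_X_mul]
  exact upperUnipotent_mul_apply_one_zero_eq_trace_sub_two
    ((SpecialLinearGroup.trace_conj U V).trans hV)

/-- If W ∈ SL(2,ℂ) can be written as X·U·Y_μ·U⁻¹ or as X·U·X⁻¹·U⁻¹, then its lower-left
entry equals tr(W) − 2. -/
theorem farey_trace_identity (μ : ℂ) (W : Matrix.SpecialLinearGroup (Fin 2) ℂ)
    (h : (∃ U : Matrix.SpecialLinearGroup (Fin 2) ℂ, W = X * U * Y μ * U⁻¹) ∨
         (∃ U : Matrix.SpecialLinearGroup (Fin 2) ℂ, W = X * U * X⁻¹ * U⁻¹)) :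
    (W : Matrix (Fin 2) (Fin 2) ℂ) 1 0 =
      Matrix.trace (W : Matrix (Fin 2) (Fin 2) ℂ) - 2 := by
  rcases h with ⟨U, rfl⟩ | ⟨U, rfl⟩
  · exact X_mul_conj_apply_one_zero (trace_Y μ)
  · exact X_mul_conj_apply_one_zero trace_X_inv
end

section
/- Let A, B ∈ SL(2,ℂ) with tr(A) = 2, tr(B) = 2, A ≠ 1, B ≠ 1, and let ν = tr(AB) − 2. If ν ≠ 0, then there exists M ∈ SL(2,ℂ) such that M·A·M⁻¹ = X and M·B·M⁻¹ = Y_ν. -/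
open Matrix

/-! Write `N = A - 1` and `N' = B - 1`. The trace conditions make `N` and `N'` square to zero
and give `ν = tr (N' N)`, while for `det N' = 0` the `2 × 2` identity `N' N N' = tr (N' N) • N'`
holds. Hence every row vector `m = z N'` satisfies `m N' = 0` and `m N N' = ν m`, so the matrix
with rows `m`, `m N` intertwines `N` with `X - 1` and `N'` with `Y ν - 1`. Its determinant is
`-ν` times that of the matrix with rows `z`, `z N'`, which is nonzero for a suitable `z` because
`N' ≠ 0`; rescaling puts it in `SL(2, ℂ)`. -/

section
variable {R : Type*} [CommRing R]

theorem mul_mul_self_fin_two (M N : Matrix (Fin 2) (Fin 2) R) :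
    M * N * M = trace (M * N) • M - det M • adjugate N := by
  ext i j
  fin_cases i <;> fin_cases j <;>
    simp [Matrix.mul_apply, Fin.sum_univ_two, trace_fin_two, det_fin_two, adjugate_fin_two] <;> ring

theorem mul_self_eq_zero_fin_two {N : Matrix (Fin 2) (Fin 2) R} (ht : trace N = 0)
    (hd : det N = 0) : N * N = 0 := by
  simpa [ht, hd] using mul_mul_self_fin_two N 1

theorem mul_mul_self_eq_trace_smul_fin_two {M : Matrix (Fin 2) (Fin 2) R} (hd : det M = 0)
    (N : Matrix (Fin 2) (Fin 2) R) : M * N * M = trace (M * N) • M := by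
  simpa [hd] using mul_mul_self_fin_two M N

theorem det_sub_one_fin_two (A : Matrix (Fin 2) (Fin 2) R) :
    det (A - 1) = det A - trace A + 1 := by
  simp only [det_fin_two, trace_fin_two, Matrix.sub_apply, one_apply_eq, one_apply_ne zero_ne_one,
    one_apply_ne one_ne_zero]
  ring

theorem trace_mul_sub_two_of_trace_eq_two {A B : Matrix (Fin 2) (Fin 2) R}
    (hA : trace A = 2) (hB : trace B = 2) :
    trace (A * B) - 2 = trace ((B - 1) * (A - 1)) := by
  rw [trace_mul_comm (B - 1)]
  simp [sub_mul, mul_sub, trace_sub, hA, hB]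

theorem exists_det_vecMul_ne_zero [IsDomain R] {N : Matrix (Fin 2) (Fin 2) R} (hN : N ≠ 0)
    (ht : trace N = 0) (hd : det N = 0) : ∃ z : Fin 2 → R, det (of ![z, z ᵥ* N]) ≠ 0 := by
  by_contra! h
  have h01 : N 0 1 = 0 := by simpa [det_fin_two, vecMul, dotProduct] using h ![1, 0]
  have h10 : N 1 0 = 0 := by simpa [det_fin_two, vecMul, dotProduct] using h ![0, 1]
  have h11 : N 1 1 = -N 0 0 := by
    rw [trace_fin_two] at ht
    linear_combination ht
  have h00 : N 0 0 = 0 := by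
    rw [det_fin_two, h01, h10, h11] at hd
    simpa using hd
  apply hN
  ext i j
  fin_cases i <;> fin_cases j <;> simp [h00, h01, h10, h11]

def rileyConjugator (N N' : Matrix (Fin 2) (Fin 2) R) (z : Fin 2 → R) :
    Matrix (Fin 2) (Fin 2) R :=
  of ![z ᵥ* N', z ᵥ* N' ᵥ* N]

variable {N N' : Matrix (Fin 2) (Fin 2) R}

theorem smul_rileyConjugator (s : R) (z : Fin 2 → R) :
    s • rileyConjugator N N' z = rileyConjugator N N' (s • z) := by
  ext i j
  fin_cases i <;> simp [rileyConjugator, smul_vecMul]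

theorem rileyConjugator_mul_left (hN : N * N = 0) (z : Fin 2 → R) :
    rileyConjugator N N' z * N = !![0, 1; 0, 0] * rileyConjugator N N' z := by
  simp [rileyConjugator, vecMul_vecMul, Matrix.mul_assoc, hN]

theorem rileyConjugator_mul_right {ν : R} (hN' : N' * N' = 0) (h : N' * N * N' = ν • N')
    (z : Fin 2 → R) :
    rileyConjugator N N' z * N' = !![0, 0; ν, 0] * rileyConjugator N N' z := by
  simp [rileyConjugator, vecMul_vecMul, hN', h, vecMul_smul]

theorem det_rileyConjugator (hN : trace N = 0) (hN' : trace N' = 0) (hdN' : det N' = 0)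
    (z : Fin 2 → R) :
    det (rileyConjugator N N' z) = -trace (N' * N) * det (of ![z, z ᵥ* N']) := by
  obtain ⟨a, b, c, d, rfl⟩ : ∃ a b c d, N = !![a, b; c, d] := ⟨_, _, _, _, eta_fin_two N⟩
  obtain ⟨p, q, r, s, rfl⟩ : ∃ p q r s, N' = !![p, q; r, s] := ⟨_, _, _, _, eta_fin_two N'⟩
  obtain ⟨x, y, rfl⟩ : ∃ x y, z = ![x, y] := ⟨z 0, z 1, by ext i; fin_cases i <;> rfl⟩
  obtain rfl : d = -a := by
    rw [trace_fin_two_of] at hN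
    linear_combination hN
  obtain rfl : s = -p := by
    rw [trace_fin_two_of] at hN'
    linear_combination hN'
  rw [det_fin_two_of] at hdN'
  simp only [rileyConjugator, det_fin_two, trace_fin_two, mul_apply, vecMul, dotProduct,
    Fin.sum_univ_two, of_apply, cons_val_zero, cons_val_one, cons_val_fin_one]
  linear_combination (2 * a * x * y + c * y ^ 2 - b * x ^ 2) * hdN'

end

theorem exists_det_smul_eq_one {K n : Type*} [Field K] [IsAlgClosed K] [Fintype n]
    [DecidableEq n] [Nonempty n] {M : Matrix n n K} (hM : det M ≠ 0) :
    ∃ s : K, det (s • M) = 1 := by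
  obtain ⟨s, hs⟩ := IsAlgClosed.exists_pow_nat_eq (det M)⁻¹ (Fintype.card_pos (α := n))
  exact ⟨s, by rw [det_smul, hs, inv_mul_cancel₀ hM]⟩

theorem Matrix.SpecialLinearGroup.mul_mul_inv_eq_of_mul_sub_one {n R : Type*} [Fintype n]
    [DecidableEq n] [CommRing R] {M A T : SpecialLinearGroup n R}
    (h : (M : Matrix n n R) * (A - 1) = (T - 1) * M) : M * A * M⁻¹ = T := by
  rw [mul_inv_eq_iff_eq_mul]
  apply Subtype.ext
  simpa [mul_sub, sub_mul] using h

theorem X_sub_one : (X : Matrix (Fin 2) (Fin 2) ℂ) - 1 = !![0, 1; 0, 0] := by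
  ext i j
  fin_cases i <;> fin_cases j <;> simp [X]

theorem Y_sub_one (μ : ℂ) : (Y μ : Matrix (Fin 2) (Fin 2) ℂ) - 1 = !![0, 0; μ, 0] := by
  ext i j
  fin_cases i <;> fin_cases j <;> simp [Y]

theorem conj_to_riley_generators_general (A B : Matrix.SpecialLinearGroup (Fin 2) ℂ)
    (hA : Matrix.trace (A : Matrix (Fin 2) (Fin 2) ℂ) = 2)
    (hB : Matrix.trace (B : Matrix (Fin 2) (Fin 2) ℂ) = 2)
    (ν : ℂ)
    (hν : ν = Matrix.trace ((A * B : Matrix.SpecialLinearGroup (Fin 2) ℂ) :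
        Matrix (Fin 2) (Fin 2) ℂ) - 2)
    (hν0 : ν ≠ 0) :
    ∃ M : Matrix.SpecialLinearGroup (Fin 2) ℂ,
      M * A * M⁻¹ = X ∧ M * B * M⁻¹ = Y ν := by
  set N := (A : Matrix (Fin 2) (Fin 2) ℂ) - 1
  set N' := (B : Matrix (Fin 2) (Fin 2) ℂ) - 1
  have htN : trace N = 0 := by simp [N, trace_sub, hA]
  have htN' : trace N' = 0 := by simp [N', trace_sub, hB]
  have hdN : det N = 0 := by rw [det_sub_one_fin_two, A.det_coe, hA]; norm_num
  have hdN' : det N' = 0 := by rw [det_sub_one_fin_two, B.det_coe, hB]; norm_num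
  have hνN : ν = trace (N' * N) := by
    rw [hν, ← trace_mul_sub_two_of_trace_eq_two hA hB]
    rfl
  have hN'0 : N' ≠ 0 := fun h ↦ hν0 (by simpa [h] using hνN)
  obtain ⟨z, hz⟩ := exists_det_vecMul_ne_zero hN'0 htN' hdN'
  obtain ⟨s, hs⟩ := exists_det_smul_eq_one (M := rileyConjugator N N' z) (by
    rw [det_rileyConjugator htN htN' hdN', ← hνN]
    exact mul_ne_zero (neg_ne_zero.mpr hν0) hz)
  rw [smul_rileyConjugator] at hs
  refine ⟨⟨_, hs⟩, SpecialLinearGroup.mul_mul_inv_eq_of_mul_sub_one ?_,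
    SpecialLinearGroup.mul_mul_inv_eq_of_mul_sub_one ?_⟩
  · rw [X_sub_one]
    exact rileyConjugator_mul_left (mul_self_eq_zero_fin_two htN hdN) _
  · rw [Y_sub_one]
    exact rileyConjugator_mul_right (mul_self_eq_zero_fin_two htN' hdN')
      (hνN ▸ mul_mul_self_eq_trace_smul_fin_two hdN' N) _

/-- A pair of nontrivial parabolics A, B with tr(AB) − 2 = ν ≠ 0 is simultaneously conjugate
to the pair (X, Y_ν). -/
theorem conj_to_riley_generators (A B : Matrix.SpecialLinearGroup (Fin 2) ℂ)
    (hA : Matrix.trace (A : Matrix (Fin 2) (Fin 2) ℂ) = 2)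
    (hB : Matrix.trace (B : Matrix (Fin 2) (Fin 2) ℂ) = 2)
    (hA1 : A ≠ 1) (hB1 : B ≠ 1) (ν : ℂ)
    (hν : ν = Matrix.trace ((A * B : Matrix.SpecialLinearGroup (Fin 2) ℂ) :
        Matrix (Fin 2) (Fin 2) ℂ) - 2)
    (hν0 : ν ≠ 0) :
    ∃ M : Matrix.SpecialLinearGroup (Fin 2) ℂ,
      M * A * M⁻¹ = X ∧ M * B * M⁻¹ = Y ν :=
  conj_to_riley_generators_general A B hA hB ν hν hν0
end

section
/- Let W ∈ SL(2,ℂ) have lower-left entry c, and let X = [[1,1],[0,1]]. If the subgroup of SL(2,ℂ) generated by X and W is discrete and c ≠ 0, then |c| ≥ 1. -/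
open Matrix

noncomputable instance : TopologicalSpace (Matrix.SpecialLinearGroup (Fin 2) ℂ) :=
  TopologicalSpace.induced ((↑) : Matrix.SpecialLinearGroup (Fin 2) ℂ → Matrix (Fin 2) (Fin 2) ℂ)
    inferInstance

/-! If `|c| < 1`, the conjugates `W₀ = W`, `Wₙ₊₁ = Wₙ X Wₙ⁻¹` lie in `⟨X, W⟩` and have lower-left
entries `cₙ₊₁ = -cₙ²`, so `|cₙ| = |c| ^ 2 ^ n` tends to `0` without ever vanishing, while the
upper-left entries `aₙ₊₁ = 1 - aₙ cₙ` stay bounded and hence tend to `1`. Then `Wₙ₊₁ → X` with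
`Wₙ₊₁ ≠ X`, which is impossible in a discrete subgroup. -/

open Filter Topology

theorem Filter.Tendsto.eventually_eq_of_discreteTopology {α ι : Type*} [TopologicalSpace α]
    {s : Set α} [DiscreteTopology s] {l : Filter ι} {u : ι → α} {x : α}
    (hu : ∀ i, u i ∈ s) (hx : x ∈ s) (h : Tendsto u l (𝓝 x)) : ∀ᶠ i in l, u i = x := by
  have hs : Tendsto (fun i => (⟨u i, hu i⟩ : s)) l (𝓝 ⟨x, hx⟩) := tendsto_subtype_rng.2 h
  rw [nhds_discrete, tendsto_pure] at hs
  exact hs.mono fun _ hi => congrArg Subtype.val hi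

theorem le_max_of_le_one_add_mul {u : ℕ → ℝ} {r : ℝ} (hr0 : 0 ≤ r) (hr1 : r < 1)
    (h : ∀ n, u (n + 1) ≤ 1 + r * u n) (n : ℕ) : u n ≤ max (u 0) (1 - r)⁻¹ := by
  induction n with
  | zero => exact le_max_left _ _
  | succ n ih =>
    have hM : 1 ≤ (1 - r) * max (u 0) (1 - r)⁻¹ :=
      (inv_le_iff_one_le_mul₀' (sub_pos.2 hr1)).1 (le_max_right _ _)
    linarith [h n, mul_le_mul_of_nonneg_left ih hr0]

def iterConj {G : Type*} [Group G] (x w : G) : ℕ → G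
  | 0 => w
  | n + 1 => iterConj x w n * x * (iterConj x w n)⁻¹

theorem iterConj_mem_closure {G : Type*} [Group G] (x w : G) (n : ℕ) :
    iterConj x w n ∈ Subgroup.closure {x, w} := by
  induction n with
  | zero => exact Subgroup.subset_closure (by simp [iterConj])
  | succ n ih =>
    exact mul_mem (mul_mem ih (Subgroup.subset_closure (by simp))) (inv_mem ih)

section NegSqRecurrence

variable {𝕜 : Type*} [NormedField 𝕜] {a c : ℕ → 𝕜}

theorem norm_eq_pow_two_pow_of_neg_sq (hc : ∀ n, c (n + 1) = -c n ^ 2) (n : ℕ) :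
    ‖c n‖ = ‖c 0‖ ^ 2 ^ n := by
  induction n with
  | zero => simp
  | succ n ih => rw [hc, norm_neg, norm_pow, ih, ← pow_mul, pow_succ]

theorem tendsto_of_neg_sq_recurrence (hc : ∀ n, c (n + 1) = -c n ^ 2)
    (ha : ∀ n, a (n + 1) = 1 - a n * c n) (hc0 : ‖c 0‖ < 1) :
    Tendsto c atTop (𝓝 0) ∧ Tendsto a atTop (𝓝 1) := by
  have hc_norm := norm_eq_pow_two_pow_of_neg_sq hc
  have hc_lim : Tendsto c atTop (𝓝 0) := by
    rw [tendsto_zero_iff_norm_tendsto_zero, funext hc_norm]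
    exact (tendsto_pow_atTop_nhds_zero_of_lt_one (norm_nonneg _) hc0).comp
      (tendsto_pow_atTop_atTop_of_one_lt one_lt_two)
  have hc_le n : ‖c n‖ ≤ ‖c 0‖ := by
    rw [hc_norm]
    exact pow_le_of_le_one (norm_nonneg _) hc0.le (pow_ne_zero _ two_ne_zero)
  have ha_bdd : IsBoundedUnder (· ≤ ·) atTop (norm ∘ a) := by
    refine isBoundedUnder_of ⟨_, fun n => le_max_of_le_one_add_mul (norm_nonneg _) hc0 ?_ n⟩
    intro n
    calc ‖a (n + 1)‖ ≤ 1 + ‖a n‖ * ‖c n‖ := by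
          rw [ha, ← norm_mul, ← norm_one (α := 𝕜)]; exact norm_sub_le _ _
      _ ≤ 1 + ‖c 0‖ * ‖a n‖ := by nlinarith [hc_le n, norm_nonneg (a n)]
  refine ⟨hc_lim, ?_⟩
  rw [← tendsto_add_atTop_iff_nat 1, funext ha]
  simpa using tendsto_const_nhds.sub (isBoundedUnder_le_mul_tendsto_zero ha_bdd hc_lim)

end NegSqRecurrence

namespace ShimizuLeutbecher

local notation "SL₂ℂ" => Matrix.SpecialLinearGroup (Fin 2) ℂ

theorem coe_mul_X_mul_inv (A : SL₂ℂ) :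
    ((A * X * A⁻¹ : SL₂ℂ) : Matrix (Fin 2) (Fin 2) ℂ) =
      !![1 - A 0 0 * A 1 0, A 0 0 ^ 2; -A 1 0 ^ 2, 1 + A 0 0 * A 1 0] := by
  have hdet := A.2
  rw [Matrix.det_fin_two] at hdet
  simp only [Matrix.SpecialLinearGroup.coe_mul, Matrix.SpecialLinearGroup.coe_inv]
  ext i j
  fin_cases i <;> fin_cases j <;>
    simp only [X, adjugate_fin_two, Fin.isValue, Fin.zero_eta, Fin.mk_one, Matrix.mul_apply,
      of_apply, cons_val', cons_val_fin_one, Fin.sum_univ_two, cons_val_zero, cons_val_one,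
      mul_one, mul_zero, add_zero, mul_neg]
  · linear_combination hdet
  · ring
  · ring
  · linear_combination hdet

theorem isInducing_coe : IsInducing fun A : SL₂ℂ => (A : Matrix (Fin 2) (Fin 2) ℂ) :=
  ⟨rfl⟩

theorem tendsto_mul_X_mul_inv {ι : Type*} {l : Filter ι} {A : ι → SL₂ℂ}
    (ha : Tendsto (fun i => A i 0 0) l (𝓝 1)) (hc : Tendsto (fun i => A i 1 0) l (𝓝 0)) :
    Tendsto (fun i => A i * X * (A i)⁻¹) l (𝓝 X) := by
  rw [isInducing_coe.tendsto_nhds_iff]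
  simp only [Function.comp_def, coe_mul_X_mul_inv]
  have hac : Tendsto (fun i => A i 0 0 * A i 1 0) l (𝓝 0) := by simpa using ha.mul hc
  refine tendsto_pi_nhds.2 fun i => tendsto_pi_nhds.2 fun j => ?_
  fin_cases i <;> fin_cases j <;>
    simp only [X, Fin.isValue, Fin.zero_eta, Fin.mk_one, of_apply, cons_val', cons_val_zero,
      cons_val_one, cons_val_fin_one]
  · simpa using tendsto_const_nhds.sub hac
  · simpa using ha.pow 2
  · simpa using (hc.pow 2).neg
  · simpa using tendsto_const_nhds.add hac

end ShimizuLeutbecher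

open ShimizuLeutbecher

/-- Shimizu–Leutbecher: if ⟨X, W⟩ is discrete and the lower-left entry c of W is nonzero,
then |c| ≥ 1. -/
theorem shimizu_leutbecher (W : Matrix.SpecialLinearGroup (Fin 2) ℂ)
    (hdisc : DiscreteTopology
      (Subgroup.closure ({X, W} : Set (Matrix.SpecialLinearGroup (Fin 2) ℂ))))
    (hc : (W : Matrix (Fin 2) (Fin 2) ℂ) 1 0 ≠ 0) :
    1 ≤ ‖(W : Matrix (Fin 2) (Fin 2) ℂ) 1 0‖ := by
  by_contra! hlt
  set A := iterConj X W
  have hA n : ((A (n + 1) : Matrix (Fin 2) (Fin 2) ℂ)) = _ := coe_mul_X_mul_inv (A n)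
  have hc_rec n : A (n + 1) 1 0 = -A n 1 0 ^ 2 := by simp [hA]
  have ha_rec n : A (n + 1) 0 0 = 1 - A n 0 0 * A n 1 0 := by simp [hA]
  obtain ⟨hc_lim, ha_lim⟩ := tendsto_of_neg_sq_recurrence
    (a := fun n => A n 0 0) (c := fun n => A n 1 0) hc_rec ha_rec hlt
  have hlim : Tendsto (fun n => A (n + 1)) atTop (𝓝 X) := tendsto_mul_X_mul_inv ha_lim hc_lim
  obtain ⟨n, hn⟩ := (hlim.eventually_eq_of_discreteTopology (fun n => iterConj_mem_closure X W _)
    (Subgroup.subset_closure (by simp))).exists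
  have hne : ‖A (n + 1) 1 0‖ ≠ 0 :=
    (norm_eq_pow_two_pow_of_neg_sq (c := fun n => A n 1 0) hc_rec (n + 1)).trans_ne
      (pow_ne_zero _ (norm_ne_zero_iff.2 hc))
  rw [show A (n + 1) = X from hn] at hne
  simp [X] at hne
end

section
/- Let A, B ∈ SL(2,ℂ) with tr(A) = 2, tr(B) = 2, A ≠ 1, B ≠ 1, and suppose tr(AB) is real and tr(AB) ≠ 2. Then there exists M ∈ SL(2,ℂ) such that for every g in the subgroup generated by A and B, all four entries of M·g·M⁻¹ are real. -/
open Matrix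


lemma vec2_ne_zero {v : Fin 2 → ℂ} (h : v ≠ 0) : v 0 ≠ 0 ∨ v 1 ≠ 0 := by
  by_contra hc
  push_neg at hc
  exact h (funext fun i => by fin_cases i <;> simp [hc.1, hc.2])

lemma parallel_of_cross {v s : Fin 2 → ℂ} (hv : v ≠ 0)
    (h : v 0 * s 1 - v 1 * s 0 = 0) : ∃ c : ℂ, s = c • v := by
  rcases vec2_ne_zero hv with h0 | h1
  · refine ⟨s 0 / v 0, funext fun i => ?_⟩
    fin_cases i
    · simp; field_simp
    · simp; field_simp; linear_combination h
  · refine ⟨s 1 / v 1, funext fun i => ?_⟩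
    fin_cases i
    · simp; field_simp; linear_combination -h
    · simp; field_simp

lemma sq_zero_of_parabolic (A : Matrix (Fin 2) (Fin 2) ℂ) (hdet : A.det = 1)
    (htr : A.trace = 2) : (A - 1) * (A - 1) = 0 := by
  rw [Matrix.det_fin_two] at hdet
  rw [Matrix.trace_fin_two] at htr
  ext i j
  fin_cases i <;> fin_cases j <;>
    simp [Matrix.mul_apply, Fin.sum_univ_two, Matrix.one_apply]
  · linear_combination -hdet + A 0 0 * htr
  · linear_combination A 0 1 * htr
  · linear_combination A 1 0 * htr
  · linear_combination -hdet + A 1 1 * htr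

lemma ker_exists (N : Matrix (Fin 2) (Fin 2) ℂ) (hdet : N.det = 0) (hN : N ≠ 0) :
    ∃ v : Fin 2 → ℂ, v ≠ 0 ∧ N *ᵥ v = 0 := by
  rw [Matrix.det_fin_two] at hdet
  by_cases h0 : N 0 0 = 0 ∧ N 0 1 = 0
  · refine ⟨![N 1 1, -(N 1 0)], ?_, ?_⟩
    · intro hz
      apply hN
      have h1 := congrFun hz 0
      have h2 := congrFun hz 1
      simp at h1 h2
      ext i j
      fin_cases i <;> fin_cases j <;> simp [h0.1, h0.2, h1, h2]
    · funext i
      fin_cases i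
      · simp [Matrix.mulVec, dotProduct, Fin.sum_univ_two, h0.1, h0.2]
      · simp [Matrix.mulVec, dotProduct, Fin.sum_univ_two]; ring
  · refine ⟨![N 0 1, -(N 0 0)], ?_, ?_⟩
    · intro hz
      apply h0
      have h1 := congrFun hz 0
      have h2 := congrFun hz 1
      simp at h1 h2
      exact ⟨h2, h1⟩
    · funext i
      fin_cases i
      · simp [Matrix.mulVec, dotProduct, Fin.sum_univ_two]; ring
      · simp [Matrix.mulVec, dotProduct, Fin.sum_univ_two]; linear_combination -hdet

lemma ker_line (N : Matrix (Fin 2) (Fin 2) ℂ) (hN : N ≠ 0) {v u : Fin 2 → ℂ}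
    (hv0 : v ≠ 0) (hv : N *ᵥ v = 0) (hu : N *ᵥ u = 0) : ∃ c : ℂ, u = c • v := by
  have hNe : ∃ i j, N i j ≠ 0 := by
    by_contra hc
    push_neg at hc
    exact hN (Matrix.ext fun i j => hc i j)
  obtain ⟨i, j, hij⟩ := hNe
  have hrv : N i 0 * v 0 + N i 1 * v 1 = 0 := by
    have := congrFun hv i
    simpa [Matrix.mulVec, dotProduct, Fin.sum_univ_two] using this
  have hru : N i 0 * u 0 + N i 1 * u 1 = 0 := by
    have := congrFun hu i
    simpa [Matrix.mulVec, dotProduct, Fin.sum_univ_two] using this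
  have hαβ : N i 0 ≠ 0 ∨ N i 1 ≠ 0 := by
    fin_cases j
    · exact Or.inl hij
    · exact Or.inr hij
  have hcross : v 0 * u 1 - v 1 * u 0 = 0 := by
    rcases hαβ with hα | hβ
    · have h : N i 0 * (v 0 * u 1 - v 1 * u 0) = 0 := by
        linear_combination u 1 * hrv - v 1 * hru
      exact (mul_eq_zero.mp h).resolve_left hα
    · have h : N i 1 * (v 0 * u 1 - v 1 * u 0) = 0 := by
        linear_combination v 0 * hru - u 0 * hrv
      exact (mul_eq_zero.mp h).resolve_left hβ
  exact parallel_of_cross hv0 hcross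


/-- A group generated by two nontrivial parabolics whose product has real trace ≠ 2 can be
conjugated into SL(2,ℝ). -/
theorem parabolic_pair_fuchsian (A B : Matrix.SpecialLinearGroup (Fin 2) ℂ)
    (hA : Matrix.trace (A : Matrix (Fin 2) (Fin 2) ℂ) = 2)
    (hB : Matrix.trace (B : Matrix (Fin 2) (Fin 2) ℂ) = 2)
    (hA1 : A ≠ 1) (hB1 : B ≠ 1)
    (hreal : (Matrix.trace ((A * B : Matrix.SpecialLinearGroup (Fin 2) ℂ) :
        Matrix (Fin 2) (Fin 2) ℂ)).im = 0)
    (hne : Matrix.trace ((A * B : Matrix.SpecialLinearGroup (Fin 2) ℂ) :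
        Matrix (Fin 2) (Fin 2) ℂ) ≠ 2) :
    ∃ M : Matrix.SpecialLinearGroup (Fin 2) ℂ,
      ∀ g ∈ Subgroup.closure ({A, B} : Set (Matrix.SpecialLinearGroup (Fin 2) ℂ)),
        ∀ i j : Fin 2,
          ∃ r : ℝ, ((M * g * M⁻¹ : Matrix.SpecialLinearGroup (Fin 2) ℂ) :
            Matrix (Fin 2) (Fin 2) ℂ) i j = (r : ℂ) := by
  classical
  set N : Matrix (Fin 2) (Fin 2) ℂ := (A : Matrix (Fin 2) (Fin 2) ℂ) - 1 with hNdef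
  set P : Matrix (Fin 2) (Fin 2) ℂ := (B : Matrix (Fin 2) (Fin 2) ℂ) - 1 with hPdef
  have hN2 : N * N = 0 := sq_zero_of_parabolic _ A.2 hA
  have hP2 : P * P = 0 := sq_zero_of_parabolic _ B.2 hB
  have hNne : N ≠ 0 := by
    intro h
    rw [hNdef, sub_eq_zero] at h
    exact hA1 (Subtype.ext (by rw [h, Matrix.SpecialLinearGroup.coe_one]))
  have hPne : P ≠ 0 := by
    intro h
    rw [hPdef, sub_eq_zero] at h
    exact hB1 (Subtype.ext (by rw [h, Matrix.SpecialLinearGroup.coe_one]))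
  have hNdet : N.det = 0 := by
    have h := congrArg Matrix.det hN2
    rw [Matrix.det_mul] at h
    simpa [mul_self_eq_zero] using h
  have hPdet : P.det = 0 := by
    have h := congrArg Matrix.det hP2
    rw [Matrix.det_mul] at h
    simpa [mul_self_eq_zero] using h
  obtain ⟨v, hv0, hvk⟩ := ker_exists N hNdet hNne
  obtain ⟨s, hs0, hsk⟩ := ker_exists P hPdet hPne
  set μ : ℂ := Matrix.trace ((A * B : Matrix.SpecialLinearGroup (Fin 2) ℂ) :
      Matrix (Fin 2) (Fin 2) ℂ) - 2 with hμdef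
  have hμ0 : μ ≠ 0 := sub_ne_zero.mpr hne
  have hμim : μ.im = 0 := by
    rw [hμdef, Complex.sub_im, hreal]
    norm_num
  have htN : N.trace = 0 := by
    rw [hNdef, Matrix.trace_sub, hA, Matrix.trace_one]
    norm_num
  have htP : P.trace = 0 := by
    rw [hPdef, Matrix.trace_sub, hB, Matrix.trace_one]
    norm_num
  have htrNP : (N * P).trace = μ := by
    have hco : ((A * B : Matrix.SpecialLinearGroup (Fin 2) ℂ) : Matrix (Fin 2) (Fin 2) ℂ)
        = (N + 1) * (P + 1) := by
      rw [Matrix.SpecialLinearGroup.coe_mul, hNdef, hPdef]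
      simp
    have hexp : (N + 1) * (P + 1) = N * P + N + P + 1 := by noncomm_ring
    rw [hμdef, hco, hexp, Matrix.trace_add, Matrix.trace_add, Matrix.trace_add, htN, htP,
      Matrix.trace_one]
    norm_num
  have hNsk : N *ᵥ (N *ᵥ s) = 0 := by rw [Matrix.mulVec_mulVec, hN2, Matrix.zero_mulVec]
  have hPvk : P *ᵥ (P *ᵥ v) = 0 := by rw [Matrix.mulVec_mulVec, hP2, Matrix.zero_mulVec]
  obtain ⟨c₁, hc₁⟩ := ker_line N hNne hv0 hvk hNsk
  obtain ⟨c₂, hc₂⟩ := ker_line P hPne hs0 hsk hPvk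
  by_cases hdep : v 0 * s 1 - v 1 * s 0 = 0
  · exfalso
    obtain ⟨lam, hlam⟩ := parallel_of_cross hv0 hdep
    have hlam0 : lam ≠ 0 := by
      rintro rfl
      rw [zero_smul] at hlam
      exact hs0 hlam
    have hNs0 : N *ᵥ s = 0 := by rw [hlam, Matrix.mulVec_smul, hvk, smul_zero]
    have hNP : N * P = 0 := by
      ext i j
      have hkj : P *ᵥ (P *ᵥ Pi.single j 1) = 0 := by
        rw [Matrix.mulVec_mulVec, hP2, Matrix.zero_mulVec]
      obtain ⟨c, hc⟩ := ker_line P hPne hs0 hsk hkj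
      have hz : (N * P) *ᵥ Pi.single j (1 : ℂ) = 0 := by
        rw [← Matrix.mulVec_mulVec, hc, Matrix.mulVec_smul, hNs0, smul_zero]
      have := congrFun hz i
      simpa [Matrix.mulVec_single] using this
    rw [hNP, Matrix.trace_zero] at htrNP
    exact hμ0 htrNP.symm
  · -- independent case
    have hv₀ : N 0 0 * v 0 + N 0 1 * v 1 = 0 := by
      have := congrFun hvk 0
      simpa [Matrix.mulVec, dotProduct, Fin.sum_univ_two] using this
    have hv₁ : N 1 0 * v 0 + N 1 1 * v 1 = 0 := by
      have := congrFun hvk 1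
      simpa [Matrix.mulVec, dotProduct, Fin.sum_univ_two] using this
    have hs₀ : P 0 0 * s 0 + P 0 1 * s 1 = 0 := by
      have := congrFun hsk 0
      simpa [Matrix.mulVec, dotProduct, Fin.sum_univ_two] using this
    have hs₁ : P 1 0 * s 0 + P 1 1 * s 1 = 0 := by
      have := congrFun hsk 1
      simpa [Matrix.mulVec, dotProduct, Fin.sum_univ_two] using this
    have hNs₀ : N 0 0 * s 0 + N 0 1 * s 1 = c₁ * v 0 := by
      have := congrFun hc₁ 0
      simpa [Matrix.mulVec, dotProduct, Fin.sum_univ_two] using this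
    have hNs₁ : N 1 0 * s 0 + N 1 1 * s 1 = c₁ * v 1 := by
      have := congrFun hc₁ 1
      simpa [Matrix.mulVec, dotProduct, Fin.sum_univ_two] using this
    have hPv₀ : P 0 0 * v 0 + P 0 1 * v 1 = c₂ * s 0 := by
      have := congrFun hc₂ 0
      simpa [Matrix.mulVec, dotProduct, Fin.sum_univ_two] using this
    have hPv₁ : P 1 0 * v 0 + P 1 1 * v 1 = c₂ * s 1 := by
      have := congrFun hc₂ 1
      simpa [Matrix.mulVec, dotProduct, Fin.sum_univ_two] using this
    set Vm : Matrix (Fin 2) (Fin 2) ℂ := !![v 0, s 0; v 1, s 1] with hVdef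
    have hdetV : Vm.det ≠ 0 := by
      rw [hVdef, Matrix.det_fin_two_of]
      intro h
      exact hdep (by linear_combination h)
    have hNV : N * Vm = Vm * !![0, c₁; 0, 0] := by
      ext i j
      fin_cases i <;> fin_cases j <;>
        simp [hVdef, Matrix.mul_apply, Fin.sum_univ_two]
      · exact hv₀
      · linear_combination hNs₀
      · exact hv₁
      · linear_combination hNs₁
    have hPV : P * Vm = Vm * !![0, 0; c₂, 0] := by
      ext i j
      fin_cases i <;> fin_cases j <;>
        simp [hVdef, Matrix.mul_apply, Fin.sum_univ_two]
      · linear_combination hPv₀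
      · exact hs₀
      · linear_combination hPv₁
      · exact hs₁
    have hNPV : (N * P) * Vm = Vm * !![c₁ * c₂, 0; 0, 0] := by
      have : !![(0:ℂ), c₁; 0, 0] * !![0, 0; c₂, 0] = !![c₁ * c₂, 0; 0, 0] := by
        ext i j
        fin_cases i <;> fin_cases j <;> simp [Matrix.mul_apply, Fin.sum_univ_two] <;> ring
      calc (N * P) * Vm = N * (P * Vm) := by rw [Matrix.mul_assoc]
        _ = (N * Vm) * !![0, 0; c₂, 0] := by rw [hPV, Matrix.mul_assoc]
        _ = Vm * (!![0, c₁; 0, 0] * !![0, 0; c₂, 0]) := by rw [hNV, Matrix.mul_assoc]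
        _ = Vm * !![c₁ * c₂, 0; 0, 0] := by rw [this]
    have hμc : μ = c₁ * c₂ := by
      have hNP : N * P = Vm * !![c₁ * c₂, 0; 0, 0] * Vm⁻¹ := by
        rw [← hNPV, Matrix.mul_assoc, Matrix.mul_nonsing_inv _ (Ne.isUnit hdetV), mul_one]
      rw [← htrNP, hNP, Matrix.trace_mul_comm, ← Matrix.mul_assoc,
        Matrix.nonsing_inv_mul _ (Ne.isUnit hdetV), Matrix.one_mul, Matrix.trace_fin_two]
      simp
    have hc₁0 : c₁ ≠ 0 := by
      intro h
      exact hμ0 (by rw [hμc, h, zero_mul])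
    set C : Matrix (Fin 2) (Fin 2) ℂ := !![c₁ * v 0, s 0; c₁ * v 1, s 1] with hCdef
    have hdetC : C.det ≠ 0 := by
      rw [hCdef, Matrix.det_fin_two_of]
      intro h
      apply hdep
      have h2 : c₁ * (v 0 * s 1 - v 1 * s 0) = 0 := by linear_combination h
      exact (mul_eq_zero.mp h2).resolve_left hc₁0
    have hμc' : Matrix.trace ((A * B : Matrix.SpecialLinearGroup (Fin 2) ℂ) :
        Matrix (Fin 2) (Fin 2) ℂ) - 2 = c₁ * c₂ := by rw [← hμdef]; exact hμc
    have hAC : (A : Matrix (Fin 2) (Fin 2) ℂ) * C = C * (X : Matrix (Fin 2) (Fin 2) ℂ) := by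
      have hA' : (A : Matrix (Fin 2) (Fin 2) ℂ) = N + 1 := by rw [hNdef]; abel
      rw [hA']
      ext i j
      fin_cases i <;> fin_cases j <;>
        simp [hCdef, X, Matrix.mul_apply, Fin.sum_univ_two, Matrix.add_apply, Matrix.one_apply]
      · linear_combination c₁ * hv₀
      · linear_combination hNs₀
      · linear_combination c₁ * hv₁
      · linear_combination hNs₁
    have hBC : (B : Matrix (Fin 2) (Fin 2) ℂ) * C = C * (Y μ : Matrix (Fin 2) (Fin 2) ℂ) := by
      have hB' : (B : Matrix (Fin 2) (Fin 2) ℂ) = P + 1 := by rw [hPdef]; abel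
      rw [hB']
      ext i j
      fin_cases i <;> fin_cases j <;>
        simp [hCdef, Y, Matrix.mul_apply, Fin.sum_univ_two, Matrix.add_apply, Matrix.one_apply]
      · linear_combination c₁ * hPv₀ - s 0 * hμc'
      · linear_combination hs₀
      · linear_combination c₁ * hPv₁ - s 1 * hμc'
      · linear_combination hs₁
    obtain ⟨lam, hlam⟩ : ∃ lam : ℂ, lam ^ 2 = C.det :=
      ⟨C.det ^ (((2 : ℕ) : ℂ))⁻¹, Complex.cpow_nat_inv_pow _ two_ne_zero⟩
    have hlam0 : lam ≠ 0 := by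
      intro h
      rw [h] at hlam
      exact hdetC (by simpa using hlam.symm)
    set C' : Matrix (Fin 2) (Fin 2) ℂ := lam⁻¹ • C with hC'def
    have hdetC' : C'.det = 1 := by
      rw [hC'def, Matrix.det_smul, Fintype.card_fin, inv_pow, hlam]
      exact inv_mul_cancel₀ hdetC
    set Mi : Matrix.SpecialLinearGroup (Fin 2) ℂ := ⟨C', hdetC'⟩ with hMidef
    have hMicoe : (Mi : Matrix (Fin 2) (Fin 2) ℂ) = C' := rfl
    have hMiinv : ((Mi⁻¹ : Matrix.SpecialLinearGroup (Fin 2) ℂ) :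
        Matrix (Fin 2) (Fin 2) ℂ) = C'.adjugate := by
      rw [Matrix.SpecialLinearGroup.coe_inv, hMicoe]
    have hadj : C'.adjugate * C' = 1 := by
      rw [Matrix.adjugate_mul, hdetC', one_smul]
    have hAC' : (A : Matrix (Fin 2) (Fin 2) ℂ) * C' = C' * (X : Matrix (Fin 2) (Fin 2) ℂ) := by
      rw [hC'def, mul_smul_comm, smul_mul_assoc, hAC]
    have hBC' : (B : Matrix (Fin 2) (Fin 2) ℂ) * C' = C' * (Y μ : Matrix (Fin 2) (Fin 2) ℂ) := by
      rw [hC'def, mul_smul_comm, smul_mul_assoc, hBC]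
    have hMA : Mi⁻¹ * A * (Mi⁻¹)⁻¹ = X := by
      rw [inv_inv]
      apply Subtype.ext
      rw [Matrix.SpecialLinearGroup.coe_mul, Matrix.SpecialLinearGroup.coe_mul, hMiinv, hMicoe,
        Matrix.mul_assoc, hAC', ← Matrix.mul_assoc, hadj, Matrix.one_mul]
    have hMB : Mi⁻¹ * B * (Mi⁻¹)⁻¹ = Y μ := by
      rw [inv_inv]
      apply Subtype.ext
      rw [Matrix.SpecialLinearGroup.coe_mul, Matrix.SpecialLinearGroup.coe_mul, hMiinv, hMicoe,
        Matrix.mul_assoc, hBC', ← Matrix.mul_assoc, hadj, Matrix.one_mul]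
    have hμre : ((μ.re : ℝ) : ℂ) = μ := Complex.ext (by simp) (by simp [hμim])
    refine ⟨Mi⁻¹, fun g hg => ?_⟩
    induction hg using Subgroup.closure_induction with
    | mem x hx =>
      rcases hx with rfl | hx
      · rw [hMA]
        intro i j
        fin_cases i <;> fin_cases j
        · exact ⟨1, by simp [X]⟩
        · exact ⟨1, by simp [X]⟩
        · exact ⟨0, by simp [X]⟩
        · exact ⟨1, by simp [X]⟩
      · rw [Set.mem_singleton_iff] at hx
        subst hx
        rw [hMB]
        intro i j
        fin_cases i <;> fin_cases j
        · exact ⟨1, by simp [Y]⟩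
        · exact ⟨0, by simp [Y]⟩
        · exact ⟨μ.re, by simp [Y, hμre]⟩
        · exact ⟨1, by simp [Y]⟩
    | one =>
      have h1 : Mi⁻¹ * 1 * (Mi⁻¹)⁻¹ = 1 := by group
      rw [h1]
      intro i j
      refine ⟨if i = j then 1 else 0, ?_⟩
      rw [Matrix.SpecialLinearGroup.coe_one, Matrix.one_apply]
      split <;> simp
    | mul x y hx hy px py =>
      intro i j
      obtain ⟨r1, h1⟩ := px i 0
      obtain ⟨r2, h2⟩ := py 0 j
      obtain ⟨r3, h3⟩ := px i 1
      obtain ⟨r4, h4⟩ := py 1 j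
      have hxy : Mi⁻¹ * (x * y) * (Mi⁻¹)⁻¹ = (Mi⁻¹ * x * (Mi⁻¹)⁻¹) * (Mi⁻¹ * y * (Mi⁻¹)⁻¹) := by
        group
      refine ⟨r1 * r2 + r3 * r4, ?_⟩
      rw [hxy, Matrix.SpecialLinearGroup.coe_mul, Matrix.mul_apply, Fin.sum_univ_two,
        h1, h2, h3, h4]
      push_cast
      ring
    | inv x hx px =>
      have hix : Mi⁻¹ * x⁻¹ * (Mi⁻¹)⁻¹ = (Mi⁻¹ * x * (Mi⁻¹)⁻¹)⁻¹ := by group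
      intro i j
      rw [hix, Matrix.SpecialLinearGroup.coe_inv, Matrix.adjugate_fin_two]
      fin_cases i <;> fin_cases j <;>
        simp only [Matrix.cons_val', Matrix.cons_val_zero, Matrix.empty_val',
          Matrix.cons_val_fin_one, Matrix.cons_val_one, Matrix.head_cons, Matrix.head_fin_const]
      · obtain ⟨r, h⟩ := px 1 1
        exact ⟨r, h⟩
      · obtain ⟨r, h⟩ := px 0 1
        exact ⟨-r, by rw [h]; simp⟩
      · obtain ⟨r, h⟩ := px 1 0
        exact ⟨-r, by rw [h]; simp⟩
      · obtain ⟨r, h⟩ := px 0 0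
        exact ⟨r, h⟩
end

section
/- Let u₁, u₂, v₁, v₂ ∈ SL(2,ℂ) with tr(u₁) = tr(u₂) = tr(v₁) = tr(v₂) = 2, none of u₁, u₂, v₁, v₂ equal to the identity, and tr(u₁u₂) = tr(v₁v₂) ≠ 2. Then there exists M ∈ SL(2,ℂ) such that conjugation by M carries the subgroup generated by u₁ and u₂ onto the subgroup generated by v₁ and v₂ (indeed M·u₁·M⁻¹, M·u₂·M⁻¹ generate the same subgroup as v₁, v₂). -/
/-! Over an algebraically closed field a parabolic `u₁ ≠ 1` of `SL(2)` is conjugate to the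
transvection `!![1, 1; 0, 1]`. Conjugating further by an element `!![1, x; 0, 1]` of its
centraliser puts a second parabolic `u₂` into the form `!![1, 0; μ, 1]` as soon as its lower left
entry is nonzero, and the trace of the product forces `μ = tr (u₁ u₂) - 2`, which is nonzero by
hypothesis. Hence two such pairs with the same trace of the product are conjugate to the same
normal form, and thus to each other. -/

open Matrix

open scoped MatrixGroups

namespace Matrix

section CommRing

variable {R : Type*} [CommRing R]

theorem trace_transvection_mul {n : Type*} [Fintype n] [DecidableEq n]
    (i j : n) (c : R) (M : Matrix n n R) :
    trace (transvection i j c * M) = trace M + c * M j i := by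
  rw [transvection, Matrix.add_mul, Matrix.one_mul, trace_add, trace_single_mul, smul_eq_mul]

theorem transvection_zero_one (c : R) : transvection (0 : Fin 2) 1 c = !![1, c; 0, 1] := by
  ext i j
  fin_cases i <;> fin_cases j <;> simp [transvection]

theorem transvection_one_zero (c : R) : transvection (1 : Fin 2) 0 c = !![1, 0; c, 1] := by
  ext i j
  fin_cases i <;> fin_cases j <;> simp [transvection]

end CommRing

section Field

variable {K : Type*} [Field K]

theorem exists_det_ne_zero_mul_eq_mul_transvection {u : Matrix (Fin 2) (Fin 2) K}
    (htr : u.trace = 2) (hdet : u.det = 1) (hu : u ≠ 1) :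
    ∃ P : Matrix (Fin 2) (Fin 2) K, P.det ≠ 0 ∧ u * P = P * transvection 0 1 1 := by
  -- the columns of `P` are `(u - 1) v` and `v`, for `v = e₁` or `v = e₀` outside `ker (u - 1)`
  obtain ⟨a, b, c, d, rfl⟩ : ∃ a b c d, u = !![a, b; c, d] := ⟨_, _, _, _, eta_fin_two u⟩
  rw [trace_fin_two_of] at htr
  rw [det_fin_two_of] at hdet
  have hbc : b * c = -(a - 1) ^ 2 := by linear_combination a * htr - hdet
  rw [transvection_zero_one]
  by_cases hc : c = 0
  · have hb : b ≠ 0 := by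
      rintro rfl
      obtain rfl : a = 1 := by
        rwa [zero_mul, zero_eq_neg, sq_eq_zero_iff, sub_eq_zero] at hbc
      obtain rfl : d = 1 := by linear_combination htr
      exact hu (by rw [hc, ← one_fin_two])
    refine ⟨!![b, 0; d - 1, 1], by simpa [det_fin_two_of] using hb, ?_⟩
    ext i j
    fin_cases i <;> fin_cases j <;> simp
    · linear_combination b * htr
    · linear_combination hbc + (d - a) * htr
  · refine ⟨!![a - 1, 1; c, 0], by simpa [det_fin_two_of] using hc, ?_⟩
    ext i j
    fin_cases i <;> fin_cases j <;> simp
    · linear_combination hbc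
    · linear_combination c * htr

theorem transvection_mul_eq_mul_transvection {w : Matrix (Fin 2) (Fin 2) K}
    (htr : w.trace = 2) (hdet : w.det = 1) (hc : w 1 0 ≠ 0) :
    transvection 0 1 ((1 - w 0 0) / w 1 0) * w =
      transvection 1 0 (w 1 0) * transvection 0 1 ((1 - w 0 0) / w 1 0) := by
  obtain ⟨a, b, c, d, rfl⟩ : ∃ a b c d, w = !![a, b; c, d] := ⟨_, _, _, _, eta_fin_two w⟩
  simp only [trace_fin_two_of, det_fin_two_of, of_apply, cons_val', cons_val_zero, cons_val_one,
    empty_val', cons_val_fin_one] at htr hdet hc ⊢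
  rw [transvection_zero_one, transvection_one_zero]
  ext i j
  fin_cases i <;> fin_cases j <;> simp <;> field_simp
  · ring
  · linear_combination htr - hdet
  · linear_combination htr

end Field

namespace SpecialLinearGroup

theorem trace_conj_s10 {n R : Type*} [Fintype n] [DecidableEq n] [CommRing R]
    (g u : SpecialLinearGroup n R) :
    trace (↑(g * u * g⁻¹) : Matrix n n R) = trace (u : Matrix n n R) := by
  rw [coe_mul, coe_mul, trace_mul_cycle, ← coe_mul, inv_mul_cancel, coe_one, Matrix.one_mul]

variable {K : Type*} [Field K] [IsAlgClosed K]

theorem exists_mul_eq_mul_of_det_ne_zero {n : Type*} [Fintype n] [DecidableEq n] [Nonempty n]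
    {u A : SpecialLinearGroup n K} {P : Matrix n n K} (hP : P.det ≠ 0)
    (h : (u : Matrix n n K) * P = P * (A : Matrix n n K)) :
    ∃ g : SpecialLinearGroup n K, u * g = g * A := by
  obtain ⟨s, hs⟩ := IsAlgClosed.exists_pow_nat_eq P.det (Fintype.card_pos (α := n))
  refine ⟨⟨s⁻¹ • P, by rw [det_smul, inv_pow, hs, inv_mul_cancel₀ hP]⟩, ?_⟩
  refine Subtype.ext (?_ : (u : Matrix n n K) * (s⁻¹ • P) = s⁻¹ • P * A)
  rw [Matrix.mul_smul, Matrix.smul_mul, h]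

theorem exists_conj_eq_transvection_of_trace_eq_two {u : SL(2, K)}
    (htr : trace (u : Matrix (Fin 2) (Fin 2) K) = 2) (hu : u ≠ 1) :
    ∃ g : SL(2, K), g * u * g⁻¹ = transvection zero_ne_one 1 := by
  obtain ⟨P, hP, h⟩ :=
    exists_det_ne_zero_mul_eq_mul_transvection htr u.det_coe (fun h => hu (Subtype.ext h))
  obtain ⟨g, hg⟩ := exists_mul_eq_mul_of_det_ne_zero (A := transvection zero_ne_one 1) hP h
  exact ⟨g⁻¹, by rw [inv_inv, mul_assoc, hg, inv_mul_cancel_left]⟩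

theorem coe_transvection {n R : Type*} [Fintype n] [DecidableEq n] [CommRing R]
    {i j : n} (hij : i ≠ j) (b : R) :
    (transvection hij b : Matrix n n R) = Matrix.transvection i j b :=
  rfl

theorem commute_transvection {n R : Type*} [Fintype n] [DecidableEq n] [CommRing R]
    {i j : n} (hij : i ≠ j) (b c : R) :
    Commute (transvection hij b) (transvection hij c) := by
  rw [Commute, SemiconjBy, ← transvection_add, ← transvection_add, add_comm]

theorem exists_conj_eq_transvection_pair {u₁ u₂ : SL(2, K)}
    (h₁ : trace (u₁ : Matrix (Fin 2) (Fin 2) K) = 2)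
    (h₂ : trace (u₂ : Matrix (Fin 2) (Fin 2) K) = 2)
    (hu₁ : u₁ ≠ 1) (hne : trace (↑(u₁ * u₂) : Matrix (Fin 2) (Fin 2) K) ≠ 2) :
    ∃ g : SL(2, K), g * u₁ * g⁻¹ = transvection zero_ne_one 1 ∧
      g * u₂ * g⁻¹ =
        transvection one_ne_zero (trace (↑(u₁ * u₂) : Matrix (Fin 2) (Fin 2) K) - 2) := by
  obtain ⟨g₀, hg₀⟩ := exists_conj_eq_transvection_of_trace_eq_two h₁ hu₁
  set w := g₀ * u₂ * g₀⁻¹ with hw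
  have hw_tr : trace (w : Matrix (Fin 2) (Fin 2) K) = 2 := (trace_conj_s10 g₀ u₂).trans h₂
  have hw₁₀ : (w : Matrix (Fin 2) (Fin 2) K) 1 0 =
      trace (↑(u₁ * u₂) : Matrix (Fin 2) (Fin 2) K) - 2 := by
    have h : trace (↑(transvection zero_ne_one 1 * w : SL(2, K)) : Matrix (Fin 2) (Fin 2) K) =
        trace (↑(u₁ * u₂) : Matrix (Fin 2) (Fin 2) K) := by
      rw [← hg₀, hw, ← trace_conj_s10 g₀ (u₁ * u₂)]
      group
    rw [coe_mul, coe_transvection, trace_transvection_mul, hw_tr, one_mul] at h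
    linear_combination h
  have hc : (w : Matrix (Fin 2) (Fin 2) K) 1 0 ≠ 0 := hw₁₀ ▸ sub_ne_zero.mpr hne
  set t : SL(2, K) := transvection zero_ne_one
    ((1 - (w : Matrix (Fin 2) (Fin 2) K) 0 0) / (w : Matrix (Fin 2) (Fin 2) K) 1 0)
  have htw : t * w = transvection one_ne_zero ((w : Matrix (Fin 2) (Fin 2) K) 1 0) * t :=
    Subtype.ext (transvection_mul_eq_mul_transvection hw_tr w.det_coe hc)
  refine ⟨t * g₀, ?_, ?_⟩
  · calc t * g₀ * u₁ * (t * g₀)⁻¹ = t * (g₀ * u₁ * g₀⁻¹) * t⁻¹ := by group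
      _ = _ := by rw [hg₀, (commute_transvection _ _ _).eq, mul_inv_cancel_right]
  · calc t * g₀ * u₂ * (t * g₀)⁻¹ = t * w * t⁻¹ := by rw [hw]; group
      _ = _ := by rw [htw, mul_inv_cancel_right, hw₁₀]

end SpecialLinearGroup

end Matrix

open Matrix.SpecialLinearGroup

theorem parabolic_pairs_conjugate_general (u₁ u₂ v₁ v₂ : Matrix.SpecialLinearGroup (Fin 2) ℂ)
    (hu₁ : Matrix.trace (u₁ : Matrix (Fin 2) (Fin 2) ℂ) = 2)
    (hu₂ : Matrix.trace (u₂ : Matrix (Fin 2) (Fin 2) ℂ) = 2)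
    (hv₁ : Matrix.trace (v₁ : Matrix (Fin 2) (Fin 2) ℂ) = 2)
    (hv₂ : Matrix.trace (v₂ : Matrix (Fin 2) (Fin 2) ℂ) = 2)
    (hu₁1 : u₁ ≠ 1) (hv₁1 : v₁ ≠ 1)
    (htr : Matrix.trace ((u₁ * u₂ : Matrix.SpecialLinearGroup (Fin 2) ℂ) :
        Matrix (Fin 2) (Fin 2) ℂ) =
      Matrix.trace ((v₁ * v₂ : Matrix.SpecialLinearGroup (Fin 2) ℂ) :
        Matrix (Fin 2) (Fin 2) ℂ))
    (hne : Matrix.trace ((u₁ * u₂ : Matrix.SpecialLinearGroup (Fin 2) ℂ) :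
        Matrix (Fin 2) (Fin 2) ℂ) ≠ 2) :
    ∃ M : Matrix.SpecialLinearGroup (Fin 2) ℂ,
      Subgroup.closure ({M * u₁ * M⁻¹, M * u₂ * M⁻¹} :
          Set (Matrix.SpecialLinearGroup (Fin 2) ℂ)) =
        Subgroup.closure ({v₁, v₂} : Set (Matrix.SpecialLinearGroup (Fin 2) ℂ)) := by
  obtain ⟨g, hg₁, hg₂⟩ := exists_conj_eq_transvection_pair hu₁ hu₂ hu₁1 hne
  obtain ⟨k, hk₁, hk₂⟩ := exists_conj_eq_transvection_pair hv₁ hv₂ hv₁1 (htr ▸ hne)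
  rw [← hg₁] at hk₁
  rw [← htr, ← hg₂] at hk₂
  have hconj {a b : SL(2, ℂ)} (h : k * b * k⁻¹ = g * a * g⁻¹) :
      k⁻¹ * g * a * (k⁻¹ * g)⁻¹ = b := by
    calc k⁻¹ * g * a * (k⁻¹ * g)⁻¹ = k⁻¹ * (g * a * g⁻¹) * k := by group
      _ = b := by rw [← h]; group
  exact ⟨k⁻¹ * g, by rw [hconj hk₁, hconj hk₂]⟩

/-- Two groups generated by pairs of nontrivial parabolics whose products have the same
trace ≠ 2 are conjugate in SL(2,ℂ). -/
theorem parabolic_pairs_conjugate (u₁ u₂ v₁ v₂ : Matrix.SpecialLinearGroup (Fin 2) ℂ)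
    (hu₁ : Matrix.trace (u₁ : Matrix (Fin 2) (Fin 2) ℂ) = 2)
    (hu₂ : Matrix.trace (u₂ : Matrix (Fin 2) (Fin 2) ℂ) = 2)
    (hv₁ : Matrix.trace (v₁ : Matrix (Fin 2) (Fin 2) ℂ) = 2)
    (hv₂ : Matrix.trace (v₂ : Matrix (Fin 2) (Fin 2) ℂ) = 2)
    (hu₁1 : u₁ ≠ 1) (hu₂1 : u₂ ≠ 1) (hv₁1 : v₁ ≠ 1) (hv₂1 : v₂ ≠ 1)
    (htr : Matrix.trace ((u₁ * u₂ : Matrix.SpecialLinearGroup (Fin 2) ℂ) :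
        Matrix (Fin 2) (Fin 2) ℂ) =
      Matrix.trace ((v₁ * v₂ : Matrix.SpecialLinearGroup (Fin 2) ℂ) :
        Matrix (Fin 2) (Fin 2) ℂ))
    (hne : Matrix.trace ((u₁ * u₂ : Matrix.SpecialLinearGroup (Fin 2) ℂ) :
        Matrix (Fin 2) (Fin 2) ℂ) ≠ 2) :
    ∃ M : Matrix.SpecialLinearGroup (Fin 2) ℂ,
      Subgroup.closure ({M * u₁ * M⁻¹, M * u₂ * M⁻¹} :
          Set (Matrix.SpecialLinearGroup (Fin 2) ℂ)) =
        Subgroup.closure ({v₁, v₂} : Set (Matrix.SpecialLinearGroup (Fin 2) ℂ)) :=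
  parabolic_pairs_conjugate_general u₁ u₂ v₁ v₂ hu₁ hu₂ hv₁ hv₂ hu₁1 hv₁1 htr hne
end

section
/- Let W = [[a,b],[c,d]] ∈ SL(2,ℂ) satisfy c = a + d − 2 and Re(a + d) ≤ −2, and let X = [[1,1],[0,1]]. Then the subgroup of SL(2,ℂ) generated by X and W is discrete, and the group homomorphism from the free group on two generators to SL(2,ℂ) sending the two generators to X and W respectively is injective. -/
/-!
Write `W = [[a, b], [c, d]]`. The hypotheses give `Re c ≤ -4`, so `‖c‖ ≥ 4`, and conjugating by
`S = [[1, (1 - a)/c], [0, 1]]`, which commutes with `X`, turns `W` into `Y c * X`. As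
`{X, Y c * X}` arises from `{X, Y c}` by a Nielsen move, it suffices to treat `X` and `Y c`.
For them we play ping-pong on `ℂ²` with the regions `‖v 1‖ < 2‖v 0‖` and `2‖v 0‖ < ‖v 1‖`, both
cut down to `‖v 1‖ ≥ 2`: nonzero powers of `X` send the second into the first, nonzero powers of
`Y c` the first into the second. A reduced word that is not a power of `X` therefore sends `e₀`
(fixed by `X`) into a region, so its `(1, 0)` entry has norm `≥ 2`, while `X ^ n` has
`(0, 1)` entry `n`. Every nontrivial element of `⟨X, Y c⟩` thus stays at entrywise distance `≥ 1`
from the identity, which gives freeness and discreteness at once.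
-/

open Matrix

open scoped Pointwise

namespace Matrix.SpecialLinearGroup

variable {ι F : Type*} [DecidableEq ι] [Fintype ι] [CommRing F] {i j : ι}

lemma transvection_zpow (hij : i ≠ j) (b : F) (n : ℤ) :
    transvection hij b ^ n = transvection hij (n • b) := by
  let φ : Multiplicative F →* SpecialLinearGroup ι F :=
    { toFun := fun t => transvection hij t.toAdd
      map_one' := transvection_coeff_zero hij
      map_mul' := fun s t => transvection_add hij s.toAdd t.toAdd }
  exact (map_zpow φ (.ofAdd b) n).symm

lemma transvection_smul (hij : i ≠ j) (b : F) (v : ι → F) :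
    transvection hij b • v = v + Pi.single i (b * v j) := by
  rw [SpecialLinearGroup.smul_def, transvection_coe, smul_eq_mulVec, add_mulVec, one_mulVec,
    single_mulVec]
  rfl

end Matrix.SpecialLinearGroup

lemma FreeGroup.exists_eq_zpow_of_ne_one {h : FreeGroup Unit} (hh : h ≠ 1) :
    ∃ n : ℤ, n ≠ 0 ∧ h = FreeGroup.of () ^ n := by
  have hh' : h = FreeGroup.of () ^ FreeGroup.freeGroupUnitEquivInt h :=
    (FreeGroup.freeGroupUnitEquivInt.symm_apply_apply h).symm
  refine ⟨_, fun hn => hh ?_, hh'⟩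
  rw [hh', hn, zpow_zero]

lemma FreeGroup.injective_lift_mul_right {G : Type*} [Group G] {a b : G}
    (h : Function.Injective (FreeGroup.lift ![a, b])) :
    Function.Injective (FreeGroup.lift ![a, b * a]) := by
  let ψ : FreeGroup (Fin 2) →* FreeGroup (Fin 2) := FreeGroup.lift ![.of 0, .of 1 * .of 0]
  let σ : FreeGroup (Fin 2) →* FreeGroup (Fin 2) := FreeGroup.lift ![.of 0, .of 1 * (.of 0)⁻¹]
  have hσψ : σ.comp ψ = .id _ := by
    ext i; fin_cases i <;> simp [ψ, σ]
  have hψ : FreeGroup.lift ![a, b * a] = (FreeGroup.lift ![a, b]).comp ψ := by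
    ext i; fin_cases i <;> simp [ψ]
  rw [hψ, MonoidHom.coe_comp]
  exact h.comp (Function.LeftInverse.injective (DFunLike.congr_fun hσψ))

lemma FreeGroup.injective_lift_of_conj {G : Type*} [Group G] {a b c S : G}
    (ha : S * a * S⁻¹ = a) (hb : S * b * S⁻¹ = c * a)
    (h : Function.Injective (FreeGroup.lift ![a, c])) :
    Function.Injective (FreeGroup.lift ![a, b]) := by
  have hconj : (MulAut.conj S).toMonoidHom.comp (FreeGroup.lift ![a, b]) =
      FreeGroup.lift ![a, c * a] := by
    ext i; fin_cases i <;> simp [ha, hb]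
  have hinj := FreeGroup.injective_lift_mul_right h
  rw [← hconj, MonoidHom.coe_comp] at hinj
  exact hinj.of_comp

lemma Subgroup.closure_pair_le_comap_conj {G : Type*} [Group G] {a b c S : G}
    (ha : S * a * S⁻¹ = a) (hb : S * b * S⁻¹ = c * a) :
    closure {a, b} ≤ (closure {a, c}).comap (MulAut.conj S).toMonoidHom := by
  rw [closure_le]
  rintro g (rfl | rfl) <;>
    simp only [SetLike.mem_coe, mem_comap, MulEquiv.coe_toMonoidHom, MulAut.conj_apply]
  · rw [ha]
    exact subset_closure (Set.mem_insert _ _)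
  · rw [hb]
    exact mul_mem (subset_closure (Set.mem_insert_of_mem _ rfl))
      (subset_closure (Set.mem_insert _ _))

lemma Subgroup.discreteTopology_of_isOpen {G : Type*} [TopologicalSpace G] [Group G]
    [IsTopologicalGroup G] {H : Subgroup G} {U : Set G} (hU : IsOpen U) (h1 : 1 ∈ U)
    (hHU : ∀ g ∈ H, g ∈ U → g = 1) : DiscreteTopology H := by
  refine discreteTopology_of_isOpen_singleton_one ?_
  convert hU.preimage continuous_subtype_val
  ext g
  simp only [Set.mem_singleton_iff, Set.mem_preimage]
  exact ⟨fun hg => hg ▸ h1, fun hg => Subtype.ext (hHU g g.2 hg)⟩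

lemma Complex.four_le_norm_sub_two {z : ℂ} (hz : z.re ≤ -2) : 4 ≤ ‖z - 2‖ := by
  have hre : (z - 2).re ≤ -4 := by
    rw [sub_re, re_ofNat]
    linarith
  exact (abs_re_le_norm _).trans' (by rw [abs_of_neg (by linarith)]; linarith)

lemma norm_le_norm_intCast_mul {n : ℤ} (hn : n ≠ 0) (μ : ℂ) : ‖μ‖ ≤ ‖(n : ℂ) * μ‖ := by
  rw [norm_mul, Complex.norm_intCast]
  exact le_mul_of_one_le_left (norm_nonneg μ) (by exact_mod_cast Int.one_le_abs hn)

local notation "SL2" => Matrix.SpecialLinearGroup (Fin 2) ℂ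

instance : IsTopologicalGroup SL2 where
  continuous_mul := continuous_induced_rng.2 <|
    (continuous_induced_dom.comp continuous_fst).matrix_mul
      (continuous_induced_dom.comp continuous_snd)
  continuous_inv := continuous_induced_rng.2 continuous_induced_dom.matrix_adjugate

lemma X_eq_transvection : X = SpecialLinearGroup.transvection (zero_ne_one' (Fin 2)) (1 : ℂ) := by
  ext i j; fin_cases i <;> fin_cases j <;> simp [X, SpecialLinearGroup.transvection_coe]

lemma Y_eq_transvection (μ : ℂ) :
    Y μ = SpecialLinearGroup.transvection (one_ne_zero' (Fin 2)) μ := by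
  ext i j; fin_cases i <;> fin_cases j <;> simp [Y, SpecialLinearGroup.transvection_coe]

lemma X_zpow (n : ℤ) : X ^ n = SpecialLinearGroup.transvection (zero_ne_one' (Fin 2)) (n : ℂ) := by
  rw [X_eq_transvection, SpecialLinearGroup.transvection_zpow, zsmul_one]

lemma Y_zpow (μ : ℂ) (n : ℤ) :
    Y μ ^ n = SpecialLinearGroup.transvection (one_ne_zero' (Fin 2)) (n * μ) := by
  rw [Y_eq_transvection, SpecialLinearGroup.transvection_zpow, zsmul_eq_mul]

lemma exists_conj_eq_Y_mul_X (W : SL2) (hc : W 1 0 = W 0 0 + W 1 1 - 2) (hc0 : W 1 0 ≠ 0) :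
    ∃ S : SL2, S * X * S⁻¹ = X ∧ S * W * S⁻¹ = Y (W 1 0) * X := by
  refine ⟨SpecialLinearGroup.transvection (zero_ne_one' (Fin 2)) ((1 - W 0 0) / W 1 0), ?_, ?_⟩
  · rw [mul_inv_eq_iff_eq_mul, X_eq_transvection, ← SpecialLinearGroup.transvection_add,
      ← SpecialLinearGroup.transvection_add, add_comm]
  · rw [mul_inv_eq_iff_eq_mul]
    have hdet := W.2
    rw [det_fin_two] at hdet
    ext i j
    fin_cases i <;> fin_cases j <;>
      simp only [X_eq_transvection, Y_eq_transvection, Matrix.SpecialLinearGroup.coe_mul,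
        SpecialLinearGroup.transvection_coe, mul_apply, Matrix.add_apply, one_apply, single_apply,
        Fin.sum_univ_two, Fin.isValue, Fin.zero_eta, Fin.mk_one, zero_ne_one, one_ne_zero, true_and,
        false_and, and_true, and_false, if_true, if_false, add_zero, zero_add, mul_one, mul_zero,
        one_mul, zero_mul] <;>
      field_simp
    · ring
    · linear_combination -hdet - hc
    · linear_combination -hc

def pingPongSet : Fin 2 → Set (Fin 2 → ℂ) :=
  ![{v | 2 ≤ ‖v 1‖ ∧ ‖v 1‖ < 2 * ‖v 0‖}, {v | 2 ≤ ‖v 1‖ ∧ 2 * ‖v 0‖ < ‖v 1‖}]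

lemma two_le_norm_of_mem_pingPongSet {i : Fin 2} {v : Fin 2 → ℂ} (hv : v ∈ pingPongSet i) :
    2 ≤ ‖v 1‖ := by
  fin_cases i <;> exact hv.1

lemma transvection_zero_one_smul_pingPongSet_subset {b : ℂ} (hb : 1 ≤ ‖b‖) :
    SpecialLinearGroup.transvection (zero_ne_one' (Fin 2)) b • pingPongSet 1 ⊆ pingPongSet 0 := by
  rintro _ ⟨v, ⟨hv1, hv⟩, rfl⟩
  have hbv : ‖v 1‖ ≤ ‖b * v 1‖ := by
    rw [norm_mul]
    exact le_mul_of_one_le_left (norm_nonneg _) hb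
  have htri := norm_sub_le_norm_add (b * v 1) (v 0)
  rw [add_comm] at htri
  simp only [pingPongSet, cons_val_zero, SpecialLinearGroup.transvection_smul, Set.mem_ofPred_eq,
    Pi.add_apply, ne_eq, one_ne_zero, not_false_eq_true, Pi.single_eq_of_ne, add_zero,
    Pi.single_eq_same]
  constructor <;> linarith

lemma transvection_one_zero_smul_pingPongSet_subset {b : ℂ} (hb : 4 ≤ ‖b‖) :
    SpecialLinearGroup.transvection (one_ne_zero' (Fin 2)) b • pingPongSet 0 ⊆ pingPongSet 1 := by
  rintro _ ⟨v, ⟨hv1, hv⟩, rfl⟩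
  have hbv : 4 * ‖v 0‖ ≤ ‖b * v 0‖ := by
    rw [norm_mul]
    exact mul_le_mul_of_nonneg_right hb (norm_nonneg _)
  have htri := norm_sub_le_norm_add (b * v 0) (v 1)
  rw [add_comm] at htri
  simp only [pingPongSet, cons_val_one, cons_val_fin_one, SpecialLinearGroup.transvection_smul,
    Set.mem_ofPred_eq, Pi.add_apply, Pi.single_eq_same, ne_eq, zero_ne_one, not_false_eq_true,
    Pi.single_eq_of_ne, add_zero]
  constructor <;> linarith

/-- Mathlib's ping-pong lemma is about free products, and `FreeGroup (Fin 2)` is the free product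
of two copies of `FreeGroup Unit` (`freeGroupEquivCoprodI`). -/
noncomputable def cyclicHom (μ : ℂ) (i : Fin 2) : FreeGroup Unit →* SL2 :=
  FreeGroup.lift fun _ => ![X, Y μ] i

lemma cyclicHom_eq_zpow (μ : ℂ) (i : Fin 2) {h : FreeGroup Unit} (hh : h ≠ 1) :
    ∃ n : ℤ, n ≠ 0 ∧ cyclicHom μ i h = ![X, Y μ] i ^ n := by
  obtain ⟨n, hn, rfl⟩ := FreeGroup.exists_eq_zpow_of_ne_one hh
  exact ⟨n, hn, by simp [cyclicHom]⟩

lemma cyclicHom_smul_pingPongSet_subset {μ : ℂ} (hμ : 4 ≤ ‖μ‖) :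
    Pairwise fun i j => ∀ h : FreeGroup Unit, h ≠ 1 →
      cyclicHom μ i h • pingPongSet j ⊆ pingPongSet i := by
  intro i j hij h hh
  obtain ⟨n, hn, hh⟩ := cyclicHom_eq_zpow μ i hh
  rw [hh]
  fin_cases i <;> fin_cases j <;> simp only [ne_eq, not_true_eq_false] at hij <;>
    simp only [Fin.zero_eta, Fin.mk_one, cons_val_zero, cons_val_one, cons_val_fin_one, X_zpow,
      Y_zpow]
  · exact transvection_zero_one_smul_pingPongSet_subset
      (by simpa using norm_le_norm_intCast_mul hn 1)
  · exact transvection_one_zero_smul_pingPongSet_subset ((norm_le_norm_intCast_mul hn μ).trans' hμ)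

open Monoid.CoprodI in
lemma lift_neWord_prod_eq_X_zpow_or_smul_mem (μ : ℂ) (hμ : 4 ≤ ‖μ‖) {i j : Fin 2}
    (w : NeWord (fun _ : Fin 2 => FreeGroup Unit) i j) :
    (i = 0 ∧ j = 0 ∧ ∃ n : ℤ, n ≠ 0 ∧ lift (cyclicHom μ) w.prod = X ^ n) ∨
      lift (cyclicHom μ) w.prod • Pi.single 0 1 ∈ pingPongSet i := by
  induction w with
  | @singleton i h hh =>
    obtain ⟨n, hn, hpow⟩ := cyclicHom_eq_zpow μ i hh
    fin_cases i
    · exact .inl ⟨rfl, rfl, n, hn, by simpa using hpow⟩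
    · right
      rw [NeWord.prod_singleton, lift_of]
      simp only [Fin.mk_one, cons_val_one, cons_val_fin_one] at hpow ⊢
      rw [hpow, Y_zpow]
      have hnμ := (norm_le_norm_intCast_mul hn μ).trans' hμ
      simp only [pingPongSet, cons_val_one, cons_val_fin_one, SpecialLinearGroup.transvection_smul,
        Pi.single_eq_same, mul_one, Set.mem_ofPred_eq, Pi.add_apply, ne_eq, one_ne_zero,
        not_false_eq_true, Pi.single_eq_of_ne, zero_add, zero_ne_one, add_zero, norm_one]
      constructor <;> linarith
  | @append i j k l w₁ hjk w₂ ih₁ ih₂ =>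
    rw [NeWord.append_prod, map_mul, mul_smul]
    rcases ih₂ with ⟨rfl, -, n, -, hX⟩ | h₂
    · rcases ih₁ with ⟨-, rfl, -⟩ | h₁
      · exact absurd rfl hjk
      · right
        rwa [hX, X_zpow, SpecialLinearGroup.transvection_smul_single_fst]
    · exact .inr (lift_word_ping_pong _ _ (cyclicHom_smul_pingPongSet_subset hμ) w₁ hjk
        (Set.smul_mem_smul_set h₂))

def nearOne : Set SL2 :=
  {g | ∀ i j, ‖(g : Matrix (Fin 2) (Fin 2) ℂ) i j - (1 : Matrix (Fin 2) (Fin 2) ℂ) i j‖ < 1}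

lemma one_mem_nearOne : (1 : SL2) ∈ nearOne := by
  simp [nearOne]

lemma isOpen_nearOne : IsOpen nearOne := by
  have hcoe : Continuous fun g : SL2 => (g : Matrix (Fin 2) (Fin 2) ℂ) := continuous_induced_dom
  simp only [nearOne, Set.ofPred_forall]
  exact isOpen_iInter_of_finite fun i => isOpen_iInter_of_finite fun j =>
    isOpen_lt ((hcoe.matrix_elem i j).sub continuous_const).norm continuous_const

open Monoid.CoprodI in
lemma eq_one_of_lift_mem_nearOne {μ : ℂ} (hμ : 4 ≤ ‖μ‖)
    {c : Monoid.CoprodI fun _ : Fin 2 => FreeGroup Unit} (hc : lift (cyclicHom μ) c ∈ nearOne) :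
    c = 1 := by
  by_contra hc1
  obtain ⟨i, j, w, hw⟩ := NeWord.of_word (Word.equiv c) fun h => hc1 (Word.equiv.injective h)
  obtain rfl : w.prod = c := by rw [NeWord.prod, hw]; exact Word.equiv.symm_apply_apply c
  rcases lift_neWord_prod_eq_X_zpow_or_smul_mem μ hμ w with ⟨-, -, n, hn, hX⟩ | hP
  · have h01 := hc 0 1
    have h1 := norm_le_norm_intCast_mul hn 1
    rw [hX, X_zpow, SpecialLinearGroup.transvection_coe] at h01
    simp only [Matrix.add_apply, one_apply_ne zero_ne_one, single_apply_same, zero_add,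
      sub_zero] at h01
    rw [mul_one, norm_one] at h1
    linarith
  · have h10 := hc 1 0
    have h2 := two_le_norm_of_mem_pingPongSet hP
    change 2 ≤ ‖((lift (cyclicHom μ) w.prod : Matrix (Fin 2) (Fin 2) ℂ) *ᵥ Pi.single 0 1) 1‖ at h2
    rw [mulVec_single_one, col_apply] at h2
    rw [one_apply_ne one_ne_zero, sub_zero] at h10
    linarith

lemma coprodI_lift_cyclicHom_comp (μ : ℂ) :
    (Monoid.CoprodI.lift (cyclicHom μ)).comp freeGroupEquivCoprodI.toMonoidHom =
      FreeGroup.lift ![X, Y μ] := by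
  ext i
  simp [cyclicHom]

lemma eq_one_of_lift_X_Y_mem_nearOne {μ : ℂ} (hμ : 4 ≤ ‖μ‖) {w : FreeGroup (Fin 2)}
    (hw : FreeGroup.lift ![X, Y μ] w ∈ nearOne) : w = 1 := by
  rw [← coprodI_lift_cyclicHom_comp] at hw
  exact (map_eq_one_iff _ freeGroupEquivCoprodI.injective).mp (eq_one_of_lift_mem_nearOne hμ hw)

lemma injective_lift_X_Y {μ : ℂ} (hμ : 4 ≤ ‖μ‖) :
    Function.Injective (FreeGroup.lift ![X, Y μ]) :=
  (injective_iff_map_eq_one _).mpr fun _ hw =>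
    eq_one_of_lift_X_Y_mem_nearOne hμ (hw ▸ one_mem_nearOne)

lemma eq_one_of_mem_closure_of_mem_nearOne {μ : ℂ} (hμ : 4 ≤ ‖μ‖) {g : SL2}
    (hg : g ∈ Subgroup.closure {X, Y μ}) (hU : g ∈ nearOne) : g = 1 := by
  rw [← Matrix.range_cons_cons_empty X (Y μ) ![], ← FreeGroup.range_lift_eq_closure] at hg
  obtain ⟨w, rfl⟩ := hg
  rw [eq_one_of_lift_X_Y_mem_nearOne hμ hU, map_one]

/-- If c = a + d − 2 and Re(a + d) ≤ −2 then ⟨X, W⟩ is discrete and free on X and W. -/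
theorem discrete_and_free (W : Matrix.SpecialLinearGroup (Fin 2) ℂ)
    (h : (W : Matrix (Fin 2) (Fin 2) ℂ) 1 0 =
      (W : Matrix (Fin 2) (Fin 2) ℂ) 0 0 + (W : Matrix (Fin 2) (Fin 2) ℂ) 1 1 - 2)
    (hre : ((W : Matrix (Fin 2) (Fin 2) ℂ) 0 0 + (W : Matrix (Fin 2) (Fin 2) ℂ) 1 1).re ≤ -2) :
    DiscreteTopology
        (Subgroup.closure ({X, W} : Set (Matrix.SpecialLinearGroup (Fin 2) ℂ))) ∧
      Function.Injective
        (FreeGroup.lift (![X, W]) : FreeGroup (Fin 2) →* Matrix.SpecialLinearGroup (Fin 2) ℂ) := by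
  have hμ : 4 ≤ ‖W 1 0‖ := by
    rw [h]
    exact Complex.four_le_norm_sub_two hre
  obtain ⟨S, hSX, hSW⟩ := exists_conj_eq_Y_mul_X W h (norm_pos_iff.mp (by linarith))
  refine ⟨?_, FreeGroup.injective_lift_of_conj hSX hSW (injective_lift_X_Y hμ)⟩
  refine Subgroup.discreteTopology_of_isOpen (U := (fun g => S * g * S⁻¹) ⁻¹' nearOne)
    (isOpen_nearOne.preimage (by fun_prop)) (by simpa using one_mem_nearOne) fun g hg hU => ?_
  exact (map_eq_one_iff _ (MulAut.conj S).injective).mp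
    (eq_one_of_mem_closure_of_mem_nearOne hμ (Subgroup.closure_pair_le_comap_conj hSX hSW hg) hU)
end

section
/- Let W = [[a,b],[c,d]] ∈ SL(2,ℂ) satisfy c = a + d − 2 and c ≠ 0, let ζ ∈ ℂ with |ζ| = 1, and set z₀ = (ζ − d)/c. Then c·z₀ + d = ζ and (a·z₀ + b)/(c·z₀ + d) − z₀ = 1 + (2 − ζ − conj(ζ))/c. -/
/-! Since `c z₀ + d = ζ`, the determinant condition gives `a z₀ + b = (a ζ - 1)/c`, so
`h(z₀) - z₀ = (a + d - ζ - ζ⁻¹)/c`. On the unit circle `ζ⁻¹ = conj ζ`, and the trace identity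
`a + d = c + 2` turns this into `1 + (2 - ζ - conj ζ)/c`. -/

theorem moebius_sub_self_of_denom_eq {K : Type*} [Field K] {a b c d ζ : K}
    (hdet : a * d - b * c = 1) (hc : c ≠ 0) (hζ : ζ ≠ 0) :
    (a * ((ζ - d) / c) + b) / ζ - (ζ - d) / c = (a + d - ζ - ζ⁻¹) / c := by
  field_simp
  linear_combination (-1 : K) * hdet

/-- Displacement formula on the isometric circle: for z₀ = (ζ − d)/c with |ζ| = 1,
h(z₀) − z₀ = 1 + (2 − ζ − conj ζ)/c. -/
theorem isometric_circle_displacement (a b c d : ℂ) (h : a * d - b * c = 1)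
    (h2 : c = a + d - 2) (hc : c ≠ 0) (ζ : ℂ) (hζ : ‖ζ‖ = 1)
    (z₀ : ℂ) (hz₀ : z₀ = (ζ - d) / c) :
    c * z₀ + d = ζ ∧
      (a * z₀ + b) / (c * z₀ + d) - z₀ = 1 + (2 - ζ - (starRingEnd ℂ) ζ) / c := by
  subst hz₀
  have hdenom : c * ((ζ - d) / c) + d = ζ := by rw [mul_div_cancel₀ _ hc, sub_add_cancel]
  have hζ0 : ζ ≠ 0 := norm_ne_zero_iff.mp (hζ ▸ one_ne_zero)
  refine ⟨hdenom, ?_⟩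
  rw [hdenom, moebius_sub_self_of_denom_eq h hc hζ0, Complex.inv_eq_conj hζ]
  field_simp
  linear_combination -h2
end
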